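/- arXiv:1102.5401 — 3 statements merged into one kernel-verified Lean document; each statement's English description precedes it below -/
import Mathlib

section
/- Let F be an m×n matrix, B an m×p matrix, H an l×n matrix, Q₁ a positive definite symmetric p×p matrix and Q₂ a positive definite symmetric l×l matrix. Suppose ℓ ∈ ℝⁿ admits a representation ℓ = F'ẑ + H'Q₂Hp where (p, ẑ) solve the coupled system Fp = B Q₁⁻¹ B' ẑ and F'ẑ = ℓ − H'Q₂Hp. Then the number (ℓ, p) is nonnegative, i.e. ⟨ℓ, p⟩ ≥ 0. -/
open Matrix

theorem Matrix.PosSemidef.dotProduct_mul_mul_transpose_mulVec_nonneg {m n R : Type*}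
    [Fintype m] [Fintype n] [CommRing R] [PartialOrder R] [StarRing R] [TrivialStar R]
    {A : Matrix n n R} (hA : A.PosSemidef) (B : Matrix m n R) (z : m → R) :
    0 ≤ z ⬝ᵥ (B * A * Bᵀ) *ᵥ z := by
  simpa only [conjTranspose_eq_transpose_of_trivial, star_trivial] using
    (hA.mul_mul_conjTranspose_same B).dotProduct_mulVec_nonneg z

theorem stmt1_general {m n p l : ℕ} (F : Matrix (Fin m) (Fin n) ℝ) (B : Matrix (Fin m) (Fin p) ℝ)
    (H : Matrix (Fin l) (Fin n) ℝ)
    (Q₁ : Matrix (Fin p) (Fin p) ℝ) (Q₂ : Matrix (Fin l) (Fin l) ℝ)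
    (hQ₁ : Q₁.PosDef) (hQ₂ : Q₂.PosDef)
    (ℓ : Fin n → ℝ) (pv : Fin n → ℝ) (zh : Fin m → ℝ)
    (h1 : F.mulVec pv = (B * Q₁⁻¹ * Bᵀ).mulVec zh)
    (hrep : ℓ = Fᵀ.mulVec zh + (Hᵀ * Q₂ * H).mulVec pv) :
    0 ≤ ℓ ⬝ᵥ pv := by
  have hℓ : ℓ ⬝ᵥ pv = zh ⬝ᵥ (B * Q₁⁻¹ * Bᵀ) *ᵥ zh + pv ⬝ᵥ (Hᵀ * Q₂ * Hᵀᵀ) *ᵥ pv := by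
    rw [hrep, add_dotProduct, dotProduct_comm, dotProduct_transpose_mulVec, h1,
      transpose_transpose, dotProduct_comm _ pv]
  rw [hℓ]
  exact add_nonneg (hQ₁.posSemidef.inv.dotProduct_mul_mul_transpose_mulVec_nonneg B zh)
    (hQ₂.posSemidef.dotProduct_mul_mul_transpose_mulVec_nonneg Hᵀ pv)

theorem stmt1 {m n p l : ℕ} (F : Matrix (Fin m) (Fin n) ℝ) (B : Matrix (Fin m) (Fin p) ℝ)
    (H : Matrix (Fin l) (Fin n) ℝ)
    (Q₁ : Matrix (Fin p) (Fin p) ℝ) (Q₂ : Matrix (Fin l) (Fin l) ℝ)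
    (hQ₁ : Q₁.PosDef) (hQ₂ : Q₂.PosDef)
    (ℓ : Fin n → ℝ) (pv : Fin n → ℝ) (zh : Fin m → ℝ)
    (h1 : F.mulVec pv = (B * Q₁⁻¹ * Bᵀ).mulVec zh)
    (h2 : Fᵀ.mulVec zh = ℓ - (Hᵀ * Q₂ * H).mulVec pv)
    (hrep : ℓ = Fᵀ.mulVec zh + (Hᵀ * Q₂ * H).mulVec pv) :
    0 ≤ ℓ ⬝ᵥ pv :=
  stmt1_general F B H Q₁ Q₂ hQ₁ hQ₂ ℓ pv zh h1 hrep
end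

section
/- Let F be an m×n matrix, B an m×p matrix, H an l×n matrix, Q₁ ∈ ℝ^{p×p} and Q₂ ∈ ℝ^{l×l} symmetric positive definite. If (p₁, z₁) and (p₂, z₂) both solve the system Fp = B Q₁⁻¹ B' z, F'z = ℓ − H'Q₂Hp for the same ℓ ∈ ℝⁿ, then Hp₁ = Hp₂, B'z₁ = B'z₂, and consequently ⟨ℓ, p₁⟩ = ⟨ℓ, p₂⟩. -/
/-!
Subtracting the two solutions gives a homogeneous system `F δp = B Q₁⁻¹ Bᵀ δz`,
`Fᵀ δz = -Hᵀ Q₂ H δp`. Pairing the first equation with `δz` and the second with `δp` computes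
`⟨δz, F δp⟩` in two ways, as `⟨Bᵀδz, Q₁⁻¹ Bᵀδz⟩ ≥ 0` and as `-⟨Hδp, Q₂ Hδp⟩ ≤ 0`. Both quadratic forms
therefore vanish, and positive definiteness gives `Bᵀδz = 0` and `Hδp = 0`. Then `F δp = 0` as
well, and writing `ℓ = Fᵀz₁ + HᵀQ₂H p₁` shows `⟨ℓ, δp⟩ = 0`.
-/

open Matrix

namespace Matrix

variable {ι κ α β R : Type*} [Fintype ι] [Fintype κ] [Fintype α] [Fintype β]

lemma PosDef.eq_zero_of_dotProduct_mulVec_nonpos {M : Matrix ι ι ℝ} (hM : M.PosDef)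
    {x : ι → ℝ} (hx : x ⬝ᵥ M *ᵥ x ≤ 0) : x = 0 := by
  by_contra h
  exact (hM.dotProduct_mulVec_pos h).not_ge (by simpa using hx)

lemma dotProduct_mul_mul_transpose_mulVec [CommSemiring R] (A : Matrix κ ι R)
    (M : Matrix ι ι R) (x : κ → R) :
    x ⬝ᵥ (A * M * Aᵀ) *ᵥ x = (Aᵀ *ᵥ x) ⬝ᵥ M *ᵥ (Aᵀ *ᵥ x) := by
  rw [← mulVec_mulVec, ← mulVec_mulVec, dotProduct_mulVec, ← mulVec_transpose]

lemma mulVec_eq_zero_of_homogeneous_saddle_system {F : Matrix κ ι ℝ} {B : Matrix κ α ℝ}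
    {H : Matrix β ι ℝ} {P : Matrix α α ℝ} {Q : Matrix β β ℝ} (hP : P.PosDef) (hQ : Q.PosDef)
    {x : ι → ℝ} {y : κ → ℝ} (h₁ : F *ᵥ x = (B * P * Bᵀ) *ᵥ y)
    (h₂ : Fᵀ *ᵥ y = -((Hᵀ * Q * H) *ᵥ x)) :
    Bᵀ *ᵥ y = 0 ∧ H *ᵥ x = 0 := by
  have hPform : y ⬝ᵥ F *ᵥ x = (Bᵀ *ᵥ y) ⬝ᵥ P *ᵥ (Bᵀ *ᵥ y) := by
    rw [h₁, dotProduct_mul_mul_transpose_mulVec]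
  have hQform : y ⬝ᵥ F *ᵥ x = -((H *ᵥ x) ⬝ᵥ Q *ᵥ (H *ᵥ x)) := by
    have hHform := dotProduct_mul_mul_transpose_mulVec Hᵀ Q x
    rw [transpose_transpose] at hHform
    rw [dotProduct_mulVec, ← mulVec_transpose, dotProduct_comm, h₂, dotProduct_neg, hHform]
  have hPnonneg := hP.posSemidef.dotProduct_mulVec_nonneg (Bᵀ *ᵥ y)
  have hQnonneg := hQ.posSemidef.dotProduct_mulVec_nonneg (H *ᵥ x)
  simp only [star_trivial] at hPnonneg hQnonneg
  exact ⟨hP.eq_zero_of_dotProduct_mulVec_nonpos (by linarith),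
    hQ.eq_zero_of_dotProduct_mulVec_nonpos (by linarith)⟩

lemma dotProduct_eq_zero_of_mulVec_eq_zero [CommSemiring R] {F : Matrix κ ι R}
    {H : Matrix β ι R} {Q : Matrix β β R} {ℓ p x : ι → R} {z : κ → R}
    (hℓ : ℓ = Fᵀ *ᵥ z + (Hᵀ * Q * H) *ᵥ p) (hF : F *ᵥ x = 0) (hH : H *ᵥ x = 0) :
    ℓ ⬝ᵥ x = 0 := by
  rw [hℓ, add_dotProduct, mulVec_transpose, ← dotProduct_mulVec, hF, Matrix.mul_assoc,
    ← mulVec_mulVec, mulVec_transpose, ← dotProduct_mulVec, hH]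
  simp

end Matrix

theorem stmt2 {m n p l : ℕ} (F : Matrix (Fin m) (Fin n) ℝ) (B : Matrix (Fin m) (Fin p) ℝ)
    (H : Matrix (Fin l) (Fin n) ℝ)
    (Q₁ : Matrix (Fin p) (Fin p) ℝ) (Q₂ : Matrix (Fin l) (Fin l) ℝ)
    (hQ₁ : Q₁.PosDef) (hQ₂ : Q₂.PosDef)
    (ℓ : Fin n → ℝ) (p₁ p₂ : Fin n → ℝ) (z₁ z₂ : Fin m → ℝ)
    (h11 : F.mulVec p₁ = (B * Q₁⁻¹ * Bᵀ).mulVec z₁)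
    (h12 : Fᵀ.mulVec z₁ = ℓ - (Hᵀ * Q₂ * H).mulVec p₁)
    (h21 : F.mulVec p₂ = (B * Q₁⁻¹ * Bᵀ).mulVec z₂)
    (h22 : Fᵀ.mulVec z₂ = ℓ - (Hᵀ * Q₂ * H).mulVec p₂) :
    H.mulVec p₁ = H.mulVec p₂ ∧ Bᵀ.mulVec z₁ = Bᵀ.mulVec z₂ ∧ ℓ ⬝ᵥ p₁ = ℓ ⬝ᵥ p₂ := by
  have hδ₁ : F *ᵥ (p₁ - p₂) = (B * Q₁⁻¹ * Bᵀ) *ᵥ (z₁ - z₂) := by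
    rw [mulVec_sub, mulVec_sub, h11, h21]
  have hδ₂ : Fᵀ *ᵥ (z₁ - z₂) = -((Hᵀ * Q₂ * H) *ᵥ (p₁ - p₂)) := by
    rw [mulVec_sub, mulVec_sub, h12, h22]
    abel
  obtain ⟨hB, hH⟩ := mulVec_eq_zero_of_homogeneous_saddle_system hQ₁.inv hQ₂ hδ₁ hδ₂
  have hF : F *ᵥ (p₁ - p₂) = 0 := by rw [hδ₁, ← mulVec_mulVec, hB, mulVec_zero]
  have hℓ : ℓ = Fᵀ *ᵥ z₁ + (Hᵀ * Q₂ * H) *ᵥ p₁ := by rw [h12, sub_add_cancel]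
  rw [mulVec_sub, sub_eq_zero] at hB hH
  refine ⟨hH, hB, sub_eq_zero.mp ?_⟩
  rw [← dotProduct_sub]
  exact dotProduct_eq_zero_of_mulVec_eq_zero hℓ hF (by rw [mulVec_sub, hH, sub_self])
end

section
/- Let F be an m×n matrix, B an m×p matrix, H an l×n matrix, with Q₁ (p×p) and Q₂ (l×l) symmetric positive definite, and let y ∈ ℝˡ. Suppose (x̂, p̂) solve F x̂ = B Q₁⁻¹ B' p̂ and F' p̂ = H' Q₂ (y − H x̂). Then x̂ is a minimizer over ℝⁿ × ℝᵖ (subject to Fx = Bf) of the functional J(x, f) = ⟨Q₁ f, f⟩ + ⟨Q₂ (y − Hx), y − Hx⟩; specifically, with f̂ = Q₁⁻¹ B' p̂ one has F x̂ = B f̂ and J(x̂, f̂) ≤ J(x, f) for all (x, f) with Fx = Bf. -/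
/-!
Write `f = f̂ + d` and `y - H x = (y - H x̂) - H (x - x̂)`. Expanding both quadratic forms,
`J(x, f) - J(x̂, f̂)` is a sum of two nonnegative quadratic terms plus twice
`⟨Q₁ f̂, d⟩ - ⟨Q₂ (y - H x̂), H (x - x̂)⟩`. As `Q₁ f̂ = B' p̂`, both inner products equal
`⟨p̂, F (x - x̂)⟩` (by `F x - F x̂ = B d` and the adjoint equation), so the cross term vanishes.
-/

open Matrix

namespace Matrix

variable {ι R : Type*} [Fintype ι] [CommRing R]

theorem mulVec_add_dotProduct_add_of_transpose_eq {Q : Matrix ι ι R} (hQ : Qᵀ = Q) (u d : ι → R) :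
    Q *ᵥ (u + d) ⬝ᵥ (u + d) = Q *ᵥ u ⬝ᵥ u + 2 * (Q *ᵥ u ⬝ᵥ d) + Q *ᵥ d ⬝ᵥ d := by
  have hsymm : Q *ᵥ d ⬝ᵥ u = Q *ᵥ u ⬝ᵥ d := by
    rw [dotProduct_comm, ← dotProduct_transpose_mulVec, hQ, dotProduct_comm]
  simp only [mulVec_add, add_dotProduct, dotProduct_add, hsymm]
  ring

theorem PosSemidef.le_mulVec_add_dotProduct_add [PartialOrder R] [IsOrderedRing R] [StarRing R]
    [TrivialStar R] {Q : Matrix ι ι R} (hQ : Q.PosSemidef) (u d : ι → R) :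
    Q *ᵥ u ⬝ᵥ u + 2 * (Q *ᵥ u ⬝ᵥ d) ≤ Q *ᵥ (u + d) ⬝ᵥ (u + d) := by
  have hd : 0 ≤ Q *ᵥ d ⬝ᵥ d := by
    simpa [dotProduct_comm] using hQ.dotProduct_mulVec_nonneg d
  rw [mulVec_add_dotProduct_add_of_transpose_eq (by simpa using hQ.isHermitian.eq) u d]
  exact le_add_of_nonneg_right hd

theorem transpose_mulVec_dotProduct {α β : Type*} [Fintype α] [Fintype β] (A : Matrix α β R)
    (w : α → R) (v : β → R) : Aᵀ *ᵥ w ⬝ᵥ v = w ⬝ᵥ A *ᵥ v := by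
  rw [dotProduct_comm, dotProduct_transpose_mulVec]

theorem transpose_mulVec_dotProduct_sub_eq_of_feasible {κ μ ν ρ : Type*} [Fintype κ] [Fintype μ]
    [Fintype ν] [Fintype ρ] {F : Matrix μ ν R} {B : Matrix μ κ R} {H : Matrix ρ ν R}
    {p : μ → R} {r : ρ → R} {x xhat : ν → R} {f fhat : κ → R}
    (hfeas : F *ᵥ xhat = B *ᵥ fhat) (hp : Fᵀ *ᵥ p = Hᵀ *ᵥ r) (hxf : F *ᵥ x = B *ᵥ f) :
    Bᵀ *ᵥ p ⬝ᵥ (f - fhat) = r ⬝ᵥ H *ᵥ (x - xhat) := by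
  calc Bᵀ *ᵥ p ⬝ᵥ (f - fhat) = p ⬝ᵥ F *ᵥ (x - xhat) := by
        rw [transpose_mulVec_dotProduct, mulVec_sub, mulVec_sub, hxf, hfeas]
    _ = r ⬝ᵥ H *ᵥ (x - xhat) := by
        rw [← transpose_mulVec_dotProduct, hp, transpose_mulVec_dotProduct]

end Matrix

theorem stmt8 {m n p l : ℕ} (F : Matrix (Fin m) (Fin n) ℝ) (B : Matrix (Fin m) (Fin p) ℝ)
    (H : Matrix (Fin l) (Fin n) ℝ)
    (Q₁ : Matrix (Fin p) (Fin p) ℝ) (Q₂ : Matrix (Fin l) (Fin l) ℝ)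
    (hQ₁ : Q₁.PosDef) (hQ₂ : Q₂.PosDef) (y : Fin l → ℝ)
    (xhat : Fin n → ℝ) (phat : Fin m → ℝ)
    (h1 : F.mulVec xhat = (B * Q₁⁻¹ * Bᵀ).mulVec phat)
    (h2 : Fᵀ.mulVec phat = (Hᵀ * Q₂).mulVec (y - H.mulVec xhat)) :
    F.mulVec xhat = B.mulVec ((Q₁⁻¹ * Bᵀ).mulVec phat) ∧
      ∀ (x : Fin n → ℝ) (f : Fin p → ℝ), F.mulVec x = B.mulVec f →
        Q₁.mulVec ((Q₁⁻¹ * Bᵀ).mulVec phat) ⬝ᵥ ((Q₁⁻¹ * Bᵀ).mulVec phat) +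
            Q₂.mulVec (y - H.mulVec xhat) ⬝ᵥ (y - H.mulVec xhat) ≤
          Q₁.mulVec f ⬝ᵥ f + Q₂.mulVec (y - H.mulVec x) ⬝ᵥ (y - H.mulVec x) := by
  set fhat := (Q₁⁻¹ * Bᵀ) *ᵥ phat
  have hQ₁fhat : Q₁ *ᵥ fhat = Bᵀ *ᵥ phat := by
    rw [mulVec_mulVec, mul_nonsing_inv_cancel_left _ _ ((isUnit_iff_isUnit_det _).mp hQ₁.isUnit)]
  have hfeas : F *ᵥ xhat = B *ᵥ fhat := by rw [h1, mulVec_mulVec, Matrix.mul_assoc]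
  refine ⟨hfeas, fun x f hxf => ?_⟩
  have hcross := transpose_mulVec_dotProduct_sub_eq_of_feasible hfeas
    (h2.trans (mulVec_mulVec _ _ _).symm) hxf
  rw [← hQ₁fhat] at hcross
  have h₁ := hQ₁.posSemidef.le_mulVec_add_dotProduct_add fhat (f - fhat)
  have h₂ := hQ₂.posSemidef.le_mulVec_add_dotProduct_add (y - H *ᵥ xhat) (-(H *ᵥ (x - xhat)))
  rw [add_sub_cancel] at h₁
  have hresidual : y - H *ᵥ xhat + -(H *ᵥ (x - xhat)) = y - H *ᵥ x := by rw [mulVec_sub]; abel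
  rw [hresidual, dotProduct_neg] at h₂
  linarith
end
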